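/- (L⁴ bound under the conditions of Theorem 1.2, case of Region V.) Let l, m satisfy 3/l + 2/m > 1, 1/l + 1/m < 1/2, and 3/l + 1/m < 1. Set σ = 1/(6 − 12/l − 8/m), b = 1/2 − 2σ/m, and a = 1 − σ − b. Then σ, a, b ∈ (0,1) with σ + a + b = 1, σ/l + a/2 + b/6 = 1/4, σ/m + b/2 = 1/4, and for every measurable u on D = B × J (B ⊂ ℝ³ measurable, J ⊂ ℝ an interval), ‖u‖_{L⁴(D)} ≤ ‖u‖_{L^{l,m}(D)}^{σ} · ‖u‖_{L^{2,∞}(D)}^{a} · ‖u‖_{L^{6,2}(D)}^{b}. In particular any vector field with finite L^{2,∞} and L^{6,2} norms that lies in L^m(J; L^l(B)) belongs to L⁴(D). -/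

import Mathlib

open MeasureTheory Set Filter
open scoped ENNReal NNReal Topology RealInnerProductSpace

noncomputable section

/-- Three dimensional Euclidean space. -/
abbrev R3 : Type := EuclideanSpace ℝ (Fin 3)

/-- Standard basis vectors of `R3`. -/
def evec (j : Fin 3) : R3 := EuclideanSpace.single j 1

/-- The open upper half space `{x₃ > 0}` of `R3`. -/
def hplane : Set R3 := {x : R3 | 0 < x 2}

/-- The parabolic cylinder `Q_{z,r} = B(x,r) × (t - r², t)`. -/
def pcyl (z : R3 × ℝ) (r : ℝ) : Set (R3 × ℝ) :=
  (Metric.ball z.1 r) ×ˢ (Ioo (z.2 - r ^ 2) z.2)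

/-- The space-time domain `Q = Ω × (0,T)`. -/
def Qst (Ω : Set R3) (T : ℝ) : Set (R3 × ℝ) := Ω ×ˢ Ioo 0 T

/-- Mixed space-time norm: `L^a` in space over `B`, `L^b` in time over `J`. -/
def mixedNorm {E : Type*} [NormedAddCommGroup E] (a b : ℝ≥0∞) (B : Set R3) (J : Set ℝ)
    (u : R3 × ℝ → E) : ℝ≥0∞ :=
  if b = ⊤ then
    essSup (fun s => eLpNorm (fun y => u (y, s)) a (volume.restrict B)) (volume.restrict J)
  else
    (∫⁻ s in J, eLpNorm (fun y => u (y, s)) a (volume.restrict B) ^ b.toReal) ^ (1 / b.toReal)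

/-- The parabolic Morrey quantity `m_γ(f)` on `Q`. -/
def morrey (γ : ℝ) (Q : Set (R3 × ℝ)) (f : R3 × ℝ → R3) : ℝ≥0∞ :=
  ⨆ (z : R3 × ℝ) (_ : z ∈ closure Q) (r : ℝ) (_ : 0 < r),
    ENNReal.ofReal (r ^ (2 - γ)) *
      ((volume (pcyl z r ∩ Q))⁻¹ * ∫⁻ w in pcyl z r ∩ Q, (‖f w‖₊ : ℝ≥0∞) ^ 2) ^ (1 / 2 : ℝ)

/-- Scalar test functions supported in `A`. -/
def IsTest (A : Set (R3 × ℝ)) (φ : R3 × ℝ → ℝ) : Prop :=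
  ContDiff ℝ (⊤ : ℕ∞) φ ∧ HasCompactSupport φ ∧ tsupport φ ⊆ A

/-- Vector test functions supported in `A`. -/
def IsTestV (A : Set (R3 × ℝ)) (φ : R3 × ℝ → R3) : Prop :=
  ContDiff ℝ (⊤ : ℕ∞) φ ∧ HasCompactSupport φ ∧ tsupport φ ⊆ A

/-- `w` is the weak derivative of `v` in direction `dir` on the region `A`. -/
def IsWeakDerivOn (A : Set (R3 × ℝ)) (v w : R3 × ℝ → ℝ) (dir : R3 × ℝ) : Prop :=
  ∀ φ : R3 × ℝ → ℝ, IsTest A φ →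
    ∫ z in A, v z * fderiv ℝ φ z dir = - ∫ z in A, w z * φ z

/-- `|∇u|²` as an extended real number (where `du z j = ∂ⱼ u (z)`). -/
def gradSqE (du : R3 × ℝ → Fin 3 → R3) (z : R3 × ℝ) : ℝ≥0∞ :=
  ∑ j : Fin 3, (‖du z j‖₊ : ℝ≥0∞) ^ 2

/-- `|∇u|²` as a real number. -/
def gradSq (du : R3 × ℝ → Fin 3 → R3) (z : R3 × ℝ) : ℝ :=
  ∑ j : Fin 3, ‖du z j‖ ^ 2

/-- The convection term `(u·∇)u = ∑ⱼ uⱼ ∂ⱼu`. -/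
def convTerm (u : R3 × ℝ → R3) (du : R3 × ℝ → Fin 3 → R3) (z : R3 × ℝ) : R3 :=
  ∑ j : Fin 3, u z j • du z j

/-- The spatial Laplacian of a (smooth) test function. -/
def lapl (φ : R3 × ℝ → ℝ) (z : R3 × ℝ) : ℝ :=
  ∑ j : Fin 3, fderiv ℝ (fun w => fderiv ℝ φ w (evec j, (0 : ℝ))) z (evec j, (0 : ℝ))

/-- A suitable weak solution `(u, p)` (with weak derivatives `du`, `d2u`, `dp` of `u`, `u`'s
gradient and `p`) of the Navier-Stokes system with force `f` on `Q = Ω × (0,T)`, near the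
flat boundary part `Γ ⊆ ∂Ω`, vanishing on `Γ`.  The vanishing of `u` on `Γ` is encoded by
extending `u` (and `du`) by zero and requiring the weak-derivative identity for test
functions which may cross `Γ` (but stay away from `∂Ω \ Γ`).  Taking `Γ = ∅` gives the
notion of a suitable weak solution in the interior sense. -/
structure SWS (Ω : Set R3) (T : ℝ) (Γ : Set R3) (κ κs lam : ℝ)
    (u : R3 × ℝ → R3) (du : R3 × ℝ → Fin 3 → R3)
    (d2u : R3 × ℝ → Fin 3 → Fin 3 → R3)
    (p : R3 × ℝ → ℝ) (dp : R3 × ℝ → R3) (f : R3 × ℝ → R3) : Prop where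
  openΩ : IsOpen Ω
  Tpos : 0 < T
  Γsub : Γ ⊆ frontier Ω
  Γflat : ∃ U : Set R3, IsOpen U ∧ Γ = U ∩ {x : R3 | x 2 = 0}
  hlam : 1 < lam ∧ lam < 2
  hκ : 3 / κ + 2 / lam = 4
  hκs : 1 / κs = 1 / κ - 1 / 3
  meas_u : Measurable u
  meas_du : Measurable du
  meas_p : Measurable p
  meas_dp : Measurable dp
  meas_f : Measurable f
  u_ext : ∀ z : R3 × ℝ, z ∉ Qst Ω T → u z = 0
  du_ext : ∀ z : R3 × ℝ, z ∉ Qst Ω T → du z = 0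
  u_L2inf : mixedNorm 2 ⊤ Ω (Ioo 0 T) u < ⊤
  ugrad_L2 : (∫⁻ z in Qst Ω T, gradSqE du z) < ⊤
  p_int : mixedNorm (ENNReal.ofReal κs) (ENNReal.ofReal lam) Ω (Ioo 0 T) p < ⊤
  d2u_int : mixedNorm (ENNReal.ofReal κ) (ENNReal.ofReal lam) Ω (Ioo 0 T)
      (fun z => Real.sqrt (∑ i : Fin 3, ∑ j : Fin 3, ‖d2u z i j‖ ^ 2)) < ⊤
  dp_int : mixedNorm (ENNReal.ofReal κ) (ENNReal.ofReal lam) Ω (Ioo 0 T) dp < ⊤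
  grad_u : ∀ i j : Fin 3,
    IsWeakDerivOn {z : R3 × ℝ | z.1 ∉ frontier Ω \ Γ ∧ z.2 ∈ Ioo 0 T}
      (fun z => u z i) (fun z => du z j i) (evec j, (0 : ℝ))
  grad_du : ∀ i j k : Fin 3,
    IsWeakDerivOn (Qst Ω T) (fun z => du z j i) (fun z => d2u z k j i) (evec k, (0 : ℝ))
  grad_p : ∀ j : Fin 3, IsWeakDerivOn (Qst Ω T) p (fun z => dp z j) (evec j, (0 : ℝ))
  div_free : ∀ᵐ z ∂(volume.restrict (Qst Ω T)), ∑ j : Fin 3, du z j j = 0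
  nse : ∀ φ : R3 × ℝ → R3, IsTestV (Qst Ω T) φ →
    (- ∫ z in Qst Ω T, (inner ℝ (u z) (fderiv ℝ φ z ((0 : R3), (1 : ℝ))) : ℝ))
      + (∫ z in Qst Ω T, ∑ j : Fin 3, (inner ℝ (du z j) (fderiv ℝ φ z (evec j, (0 : ℝ))) : ℝ))
      + (∫ z in Qst Ω T, (inner ℝ (convTerm u du z) (φ z) : ℝ))
      - (∫ z in Qst Ω T, p z * ∑ j : Fin 3, fderiv ℝ φ z (evec j, (0 : ℝ)) j)
    = ∫ z in Qst Ω T, (inner ℝ (f z) (φ z) : ℝ)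
  lei : ∀ᵐ t ∂(volume.restrict (Ioo 0 T)), ∀ φ : R3 × ℝ → ℝ,
    ContDiff ℝ (⊤ : ℕ∞) φ → HasCompactSupport φ → (∀ z, 0 ≤ φ z) →
    tsupport φ ∩ ((closure Ω ×ˢ ({0} : Set ℝ)) ∪ ((frontier Ω \ Γ) ×ˢ Icc 0 T)) = ∅ →
    (∫ y in Ω, ‖u (y, t)‖ ^ 2 * φ (y, t)) + 2 * ∫ z in Ω ×ˢ Ioo 0 t, gradSq du z * φ z
      ≤ ∫ z in Ω ×ˢ Ioo 0 t,
          (‖u z‖ ^ 2 * (fderiv ℝ φ z ((0 : R3), (1 : ℝ)) + lapl φ z)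
            + (‖u z‖ ^ 2 + 2 * p z) * (∑ j : Fin 3, u z j * fderiv ℝ φ z (evec j, (0 : ℝ)))
            + 2 * (inner ℝ (f z) (u z) : ℝ) * φ z)

/-- The scaled quantity `A(r)` at `z` (with half balls `B(x,r) ∩ Ω`). -/
def funA (Ω : Set R3) (u : R3 × ℝ → R3) (z : R3 × ℝ) (r : ℝ) : ℝ≥0∞ :=
  (ENNReal.ofReal r)⁻¹ * ⨆ (s : ℝ) (_ : s ∈ Ico (z.2 - r ^ 2) z.2),
    ∫⁻ y in Metric.ball z.1 r ∩ Ω, (‖u (y, s)‖₊ : ℝ≥0∞) ^ 2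

/-- The scaled quantity `C(r)` at `z` (over `Q_{z,r} ∩ Q`). -/
def funC (Q : Set (R3 × ℝ)) (u : R3 × ℝ → R3) (z : R3 × ℝ) (r : ℝ) : ℝ≥0∞ :=
  (ENNReal.ofReal (r ^ 2))⁻¹ * ∫⁻ w in pcyl z r ∩ Q, (‖u w‖₊ : ℝ≥0∞) ^ 3

/-- The scaled quantity `E(r)` at `z`. -/
def funE (Q : Set (R3 × ℝ)) (du : R3 × ℝ → Fin 3 → R3) (z : R3 × ℝ) (r : ℝ) : ℝ≥0∞ :=
  (ENNReal.ofReal r)⁻¹ * ∫⁻ w in pcyl z r ∩ Q, gradSqE du w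

/-- The scaled mixed norm `G(r)` at `z`. -/
def funG (a b : ℝ≥0∞) (Ω : Set R3) (T : ℝ) (u : R3 × ℝ → R3) (z : R3 × ℝ) (r : ℝ) : ℝ≥0∞ :=
  (ENNReal.ofReal r)⁻¹ *
    mixedNorm a b (Metric.ball z.1 r ∩ Ω) (Ioo (z.2 - r ^ 2) z.2 ∩ Ioo 0 T) u

/-- `p` minus its spatial average over `B`, at time `w.2`. -/
def pOsc (B : Set R3) (p : R3 × ℝ → ℝ) (w : R3 × ℝ) : ℝ :=
  p w - (volume B).toReal⁻¹ * ∫ y in B, p (y, w.2)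

/-- The scaled pressure quantity `D̃(r)` at `z`. -/
def funD (κs lam : ℝ) (Ω : Set R3) (T : ℝ) (p : R3 × ℝ → ℝ) (z : R3 × ℝ) (r : ℝ) : ℝ≥0∞ :=
  (ENNReal.ofReal r)⁻¹ *
    mixedNorm (ENNReal.ofReal κs) (ENNReal.ofReal lam) (Metric.ball z.1 r ∩ Ω)
      (Ioo (z.2 - r ^ 2) z.2 ∩ Ioo 0 T) (pOsc (Metric.ball z.1 r ∩ Ω) p)

/-- The scaled pressure-gradient quantity `D̃₁(r)` at `z`. -/
def funD1 (κ lam : ℝ) (Ω : Set R3) (T : ℝ) (dp : R3 × ℝ → R3) (z : R3 × ℝ) (r : ℝ) : ℝ≥0∞ :=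
  (ENNReal.ofReal r)⁻¹ *
    mixedNorm (ENNReal.ofReal κ) (ENNReal.ofReal lam) (Metric.ball z.1 r ∩ Ω)
      (Ioo (z.2 - r ^ 2) z.2 ∩ Ioo 0 T) dp

/-- `z` is a regular point of `u`: `u` agrees a.e. near `z` (in `Q_{z,r} ∩ Q`) with a function
which is Hölder continuous with respect to the parabolic metric. -/
def RegularAt (Q : Set (R3 × ℝ)) (u : R3 × ℝ → R3) (z : R3 × ℝ) : Prop :=
  ∃ r > 0, ∃ v : R3 × ℝ → R3,
    (∀ᵐ w ∂(volume.restrict (pcyl z r ∩ Q)), u w = v w) ∧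
    ∃ α ∈ Ioc (0 : ℝ) 1, ∃ L : ℝ, ∀ w₁ ∈ pcyl z r ∩ Q, ∀ w₂ ∈ pcyl z r ∩ Q,
      ‖v w₁ - v w₂‖ ≤ L * (dist w₁.1 w₂.1 + |w₁.2 - w₂.2| ^ (1 / 2 : ℝ)) ^ α

/-- The `k`-dimensional parabolic Hausdorff (outer) measure. -/
def pHausdorff (k : ℝ) (X : Set (R3 × ℝ)) : ℝ≥0∞ :=
  ⨆ (δ : ℝ) (_ : 0 < δ),
    ⨅ (c : ℕ → R3 × ℝ) (ρ : ℕ → ℝ) (_ : ∀ i, 0 < ρ i ∧ ρ i < δ)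
      (_ : X ⊆ ⋃ i, pcyl (c i) (ρ i)), ∑' i, ENNReal.ofReal (ρ i ^ k)


/-- Three-exponent Hölder for lintegrals of `g ^ c`. -/
lemma myHolder3 {α : Type*} [MeasurableSpace α] (μ : Measure α) {g : α → ℝ≥0∞}
    (hg : AEMeasurable g μ) {e₀ e₁ e₂ w₀ w₁ w₂ c : ℝ}
    (he₀ : 0 ≤ e₀ * w₀) (he₁ : 0 ≤ e₁ * w₁) (he₂ : 0 ≤ e₂ * w₂)
    (hw₀ : 0 ≤ w₀) (hw₁ : 0 ≤ w₁) (hw₂ : 0 ≤ w₂) (hw : w₀ + w₁ + w₂ = 1)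
    (hc : c = e₀ * w₀ + e₁ * w₁ + e₂ * w₂) :
    ∫⁻ x, g x ^ c ∂μ ≤ (∫⁻ x, g x ^ e₀ ∂μ) ^ w₀ * (∫⁻ x, g x ^ e₁ ∂μ) ^ w₁
      * (∫⁻ x, g x ^ e₂ ∂μ) ^ w₂ := by
  have key := ENNReal.lintegral_prod_norm_pow_le (Finset.univ (α := Fin 3))
    (f := ![fun x => g x ^ e₀, fun x => g x ^ e₁, fun x => g x ^ e₂])
    (p := ![w₀, w₁, w₂])
    (fun i _ => by
      fin_cases i <;>
        exact (ENNReal.continuous_rpow_const.measurable.comp_aemeasurable hg))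
    (by simp [Fin.sum_univ_three, hw])
    (fun i _ => by fin_cases i <;> assumption)
  simp only [Fin.prod_univ_three, Matrix.cons_val_zero, Matrix.cons_val_one,
    Matrix.head_cons, Matrix.cons_val_two, Matrix.tail_cons] at key
  calc ∫⁻ x, g x ^ c ∂μ
      = ∫⁻ x, (g x ^ e₀) ^ w₀ * (g x ^ e₁) ^ w₁ * (g x ^ e₂) ^ w₂ ∂μ := by
        refine lintegral_congr fun x => ?_
        rw [← ENNReal.rpow_mul, ← ENNReal.rpow_mul, ← ENNReal.rpow_mul,
          ← ENNReal.rpow_add_of_nonneg _ _ he₀ he₁,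
          ← ENNReal.rpow_add_of_nonneg _ _ (by positivity) he₂, hc]
    _ ≤ _ := key

/-- The `L⁴` bound used for Region V of Theorem 1.2: for `(l,m)` with `3/l + 2/m > 1`,
`1/l + 1/m < 1/2`, `3/l + 1/m < 1`, the exponents `σ = 1/(6 - 12/l - 8/m)`,
`b = 1/2 - 2σ/m`, `a = 1 - σ - b` lie in `(0,1)`, satisfy the stated balance relations, and
`‖u‖_{L⁴(D)} ≤ ‖u‖_{L^{l,m}(D)}^σ ‖u‖_{L^{2,∞}(D)}^a ‖u‖_{L^{6,2}(D)}^b` on `D = B × J`. -/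

theorem L4_bound_regionV
    (l m : ℝ) (hl : 1 ≤ l) (hm : 1 ≤ m)
    (h1 : 1 < 3 / l + 2 / m) (h2 : 1 / l + 1 / m < 1 / 2) (h3 : 3 / l + 1 / m < 1)
    (σ a b : ℝ) (hσ : σ = 1 / (6 - 12 / l - 8 / m))
    (hb : b = 1 / 2 - 2 * σ / m) (ha : a = 1 - σ - b) :
    (σ ∈ Ioo (0 : ℝ) 1 ∧ a ∈ Ioo (0 : ℝ) 1 ∧ b ∈ Ioo (0 : ℝ) 1 ∧
      σ + a + b = 1 ∧ σ / l + a / 2 + b / 6 = 1 / 4 ∧ σ / m + b / 2 = 1 / 4) ∧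
    ∀ (B : Set R3), MeasurableSet B → ∀ (J : Set ℝ), J.OrdConnected →
      ∀ (u : R3 × ℝ → R3), Measurable u →
        mixedNorm 4 4 B J u
          ≤ mixedNorm (ENNReal.ofReal l) (ENNReal.ofReal m) B J u ^ σ
            * mixedNorm 2 ⊤ B J u ^ a
            * mixedNorm 6 2 B J u ^ b := by
  have hl0 : (0:ℝ) < l := lt_of_lt_of_le one_pos hl
  have hm0 : (0:ℝ) < m := lt_of_lt_of_le one_pos hm
  have hx : (0:ℝ) < 1 / l := by positivity
  have hy : (0:ℝ) < 1 / m := by positivity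
  have hD1 : (1:ℝ) < 6 - 12 / l - 8 / m := by
    have h2' : 6 * (1 / l) + 6 * (1 / m) < 3 := by linarith
    have h3' : 2 * (3 / l) + 2 * (1 / m) < 2 := by linarith
    have e1 : (12:ℝ) / l = 6 * (1 / l) + 2 * (3 / l) := by ring
    have e2 : (8:ℝ) / m = 6 * (1 / m) + 2 * (1 / m) := by ring
    linarith
  have hD2 : 6 - 12 / l - 8 / m < 2 := by
    have e1 : (12:ℝ) / l = 4 * (3 / l) := by ring
    have e2 : (8:ℝ) / m = 4 * (2 / m) := by ring
    linarith
  have hD0 : (0:ℝ) < 6 - 12 / l - 8 / m := by linarith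
  have hσpos : 0 < σ := by rw [hσ]; positivity
  have hσD : σ * (6 - 12 / l - 8 / m) = 1 := by
    rw [hσ, one_div, inv_mul_cancel₀ hD0.ne']
  have hσlt1 : σ < 1 := by nlinarith [mul_pos hσpos (by linarith : (0:ℝ) < 6 - 12 / l - 8 / m - 1)]
  have hDm : 4 / m < 6 - 12 / l - 8 / m := by
    have e1 : (12:ℝ) / l = 12 * (1 / l) := by ring
    have e2 : (8:ℝ) / m = 8 * (1 / m) := by ring
    have e3 : (4:ℝ) / m = 4 * (1 / m) := by ring
    linarith
  have key1 : 0 < 1 / 2 - 2 * σ / m := by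
    have h := mul_lt_mul_of_pos_left hDm hσpos
    rw [hσD] at h
    have e : 1 / 2 - 2 * σ / m = (1 - σ * (4 / m)) / 2 := by ring
    rw [e]; linarith
  have hb0 : 0 < b := by rw [hb]; exact key1
  have hb1 : b < 1 := by
    have h : 0 ≤ 2 * σ / m := by positivity
    rw [hb]; linarith
  have ha0 : 0 < a := by
    have hDm2 : 2 - 4 / m < 6 - 12 / l - 8 / m := by
      have e3 : (12:ℝ) / l = 4 * (3 / l) := by ring
      have e4 : (4:ℝ) / m = 4 * (1 / m) := by ring
      have e5 : (8:ℝ) / m = 8 * (1 / m) := by ring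
      linarith
    have h := mul_lt_mul_of_pos_left hDm2 hσpos
    rw [hσD] at h
    have e : 1 - σ - (1 / 2 - 2 * σ / m) = (1 - σ * (2 - 4 / m)) / 2 := by ring
    rw [ha, hb, e]; linarith
  have ha1 : a < 1 := by rw [ha]; linarith
  have hsum : σ + a + b = 1 := by rw [ha]; ring
  have hbal1 : σ / l + a / 2 + b / 6 = 1 / 4 := by
    rw [ha, hb]; linear_combination (-(1:ℝ)/12) * hσD
  have hbal2 : σ / m + b / 2 = 1 / 4 := by rw [hb]; ring
  refine ⟨⟨⟨hσpos, hσlt1⟩, ⟨ha0, ha1⟩, ⟨hb0, hb1⟩, hsum, hbal1, hbal2⟩, ?_⟩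
  intro B _hB J _hJ u hu
  have hl3 : (3:ℝ) < l := by
    have h : 3 / l < 1 := by linarith
    have := (div_lt_one hl0).mp h
    linarith
  have hm2 : (2:ℝ) < m := by
    have h : 1 / m < 1 / 2 := by linarith
    have := (div_lt_div_iff₀ hm0 (by norm_num : (0:ℝ) < 2)).mp h
    linarith
  -- basic notation
  have hus : ∀ s : ℝ, Measurable fun y => u (y, s) := fun s =>
    hu.comp (measurable_id.prodMk measurable_const)
  set I : ℝ → ℝ → ℝ≥0∞ :=
    fun c s => ∫⁻ y, (‖u (y, s)‖₊ : ℝ≥0∞) ^ c ∂(volume.restrict B) with hI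
  have hImeas : ∀ c : ℝ, Measurable (I c) := by
    intro c
    apply Measurable.lintegral_prod_right
    exact ENNReal.continuous_rpow_const.measurable.comp
      ((hu.comp measurable_swap).nnnorm.coe_nnreal_ennreal)
  -- rewrite each eLpNorm
  have hL4 : ∀ s : ℝ, eLpNorm (fun y => u (y, s)) 4 (volume.restrict B)
      = I 4 s ^ ((1:ℝ)/4) := by
    intro s
    rw [eLpNorm_eq_lintegral_rpow_enorm_toReal (by norm_num) (by norm_num)]
    simp only [ENNReal.toReal_ofNat, hI, enorm_eq_nnnorm]
  have hL2 : ∀ s : ℝ, eLpNorm (fun y => u (y, s)) 2 (volume.restrict B)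
      = I 2 s ^ ((1:ℝ)/2) := by
    intro s
    rw [eLpNorm_eq_lintegral_rpow_enorm_toReal (by norm_num) (by norm_num)]
    simp only [ENNReal.toReal_ofNat, hI, enorm_eq_nnnorm]
  have hL6 : ∀ s : ℝ, eLpNorm (fun y => u (y, s)) 6 (volume.restrict B)
      = I 6 s ^ ((1:ℝ)/6) := by
    intro s
    rw [eLpNorm_eq_lintegral_rpow_enorm_toReal (by norm_num) (by norm_num)]
    simp only [ENNReal.toReal_ofNat, hI, enorm_eq_nnnorm]
  have hll : (ENNReal.ofReal l).toReal = l := ENNReal.toReal_ofReal hl0.le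
  have hmm' : (ENNReal.ofReal m).toReal = m := ENNReal.toReal_ofReal hm0.le
  have hLl : ∀ s : ℝ, eLpNorm (fun y => u (y, s)) (ENNReal.ofReal l) (volume.restrict B)
      = I l s ^ ((1:ℝ)/l) := by
    intro s
    rw [eLpNorm_eq_lintegral_rpow_enorm_toReal
      (by simp only [ne_eq, ENNReal.ofReal_eq_zero, not_le]; linarith) ENNReal.ofReal_ne_top, hll]
    rfl
  -- spatial interpolation
  have spatial : ∀ s : ℝ,
      I 4 s ≤ I l s ^ (4*σ/l) * I 2 s ^ (2*a) * I 6 s ^ (2*b/3) := by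
    intro s
    refine myHolder3 (volume.restrict B) ((hus s).nnnorm.coe_nnreal_ennreal).aemeasurable
      (e₀ := l) (e₁ := 2) (e₂ := 6) ?_ ?_ ?_ ?_ ?_ ?_ ?_ ?_
    · positivity
    · positivity
    · positivity
    · positivity
    · positivity
    · positivity
    · linear_combination (4:ℝ) * hbal1
    · have e1 : l * (4*σ/l) = 4 * σ := by
        rw [mul_comm, div_mul_cancel₀ _ hl0.ne']
      rw [e1]; linarith [hsum]
  -- rewrite the mixed norms
  have h14 : (0:ℝ) ≤ 1/4 := by norm_num
  have hM4 : mixedNorm 4 4 B J u = (∫⁻ s in J, I 4 s) ^ ((1:ℝ)/4) := by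
    rw [mixedNorm, if_neg (by norm_num : (4:ℝ≥0∞) ≠ ⊤)]
    simp only [ENNReal.toReal_ofNat]
    congr 1
    refine lintegral_congr fun s => ?_
    rw [hL4 s, ← ENNReal.rpow_mul]
    norm_num
  have hM2 : mixedNorm 2 ⊤ B J u
      = essSup (fun s => I 2 s ^ ((1:ℝ)/2)) (volume.restrict J) := by
    rw [mixedNorm, if_pos rfl]
    simp only [hL2]
  have hM6 : mixedNorm 6 2 B J u
      = (∫⁻ s in J, I 6 s ^ ((1:ℝ)/3)) ^ ((1:ℝ)/2) := by
    rw [mixedNorm, if_neg (by norm_num : (2:ℝ≥0∞) ≠ ⊤)]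
    simp only [ENNReal.toReal_ofNat]
    congr 1
    refine lintegral_congr fun s => ?_
    rw [hL6 s, ← ENNReal.rpow_mul]
    norm_num
  have hMl : mixedNorm (ENNReal.ofReal l) (ENNReal.ofReal m) B J u
      = (∫⁻ s in J, I l s ^ (m/l)) ^ ((1:ℝ)/m) := by
    rw [mixedNorm, if_neg ENNReal.ofReal_ne_top, hmm']
    congr 1
    refine lintegral_congr fun s => ?_
    rw [hLl s, ← ENNReal.rpow_mul, one_div_mul_eq_div]
  set K := essSup (fun s => I 2 s ^ ((1:ℝ)/2)) (volume.restrict J) with hK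
  -- time step
  have step1 : ∀ᵐ s ∂(volume.restrict J),
      I 4 s ≤ K ^ (4*a) * (I l s ^ (4*σ/l) * I 6 s ^ (2*b/3)) := by
    filter_upwards [ENNReal.ae_le_essSup (fun s => I 2 s ^ ((1:ℝ)/2))] with s hs
    calc I 4 s ≤ I l s ^ (4*σ/l) * I 2 s ^ (2*a) * I 6 s ^ (2*b/3) := spatial s
      _ = I 2 s ^ (2*a) * (I l s ^ (4*σ/l) * I 6 s ^ (2*b/3)) := by ring
      _ ≤ K ^ (4*a) * (I l s ^ (4*σ/l) * I 6 s ^ (2*b/3)) := by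
          have e : I 2 s ^ (2*a) = (I 2 s ^ ((1:ℝ)/2)) ^ (4*a) := by
            rw [← ENNReal.rpow_mul]; congr 1; ring
          rw [e]
          exact mul_le_mul_left (ENNReal.rpow_le_rpow hs (by positivity)) _
  have hfmeas : Measurable fun s => I l s ^ (4*σ/l) :=
    ENNReal.continuous_rpow_const.measurable.comp (hImeas l)
  have hgmeas : Measurable fun s => I 6 s ^ (2*b/3) :=
    ENNReal.continuous_rpow_const.measurable.comp (hImeas 6)
  have hσm : σ < 1/4 * m := by
    have h' : σ/m < 1/4 := by linarith [hbal2, hb0]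
    exact (div_lt_iff₀ hm0).mp h'
  have hpq : Real.HolderConjugate (m/(4*σ)) (1/(2*b)) := by
    rw [Real.holderConjugate_iff]; constructor
    · rw [lt_div_iff₀ (by positivity : (0:ℝ) < 4*σ)]
      linarith
    · rw [inv_div, one_div, inv_inv]
      have e : 4*σ/m = 4*(σ/m) := by ring
      linarith [hbal2]
  have holder := ENNReal.lintegral_mul_le_Lp_mul_Lq (volume.restrict J) hpq
    hfmeas.aemeasurable hgmeas.aemeasurable
  simp only [Pi.mul_apply, ← ENNReal.rpow_mul] at holder
  have e1 : 4*σ/l * (m/(4*σ)) = m/l := by field_simp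
  have e2 : 2*b/3 * (1/(2*b)) = 1/3 := by field_simp
  have e3 : 1/(m/(4*σ)) = 4*σ/m := one_div_div _ _
  have e4 : 1/(1/(2*b)) = 2*b := one_div_one_div _
  rw [e1, e2, e3, e4] at holder
  have step2 : (∫⁻ s in J, I 4 s)
      ≤ K ^ (4*a) * ((∫⁻ s in J, I l s ^ (m/l)) ^ (4*σ/m)
        * (∫⁻ s in J, I 6 s ^ ((1:ℝ)/3)) ^ (2*b)) := by
    calc (∫⁻ s in J, I 4 s)
        ≤ ∫⁻ s in J, K ^ (4*a) * (I l s ^ (4*σ/l) * I 6 s ^ (2*b/3)) :=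
          lintegral_mono_ae step1
      _ = K ^ (4*a) * ∫⁻ s in J, I l s ^ (4*σ/l) * I 6 s ^ (2*b/3) :=
          lintegral_const_mul _ (hfmeas.mul hgmeas)
      _ ≤ K ^ (4*a) * ((∫⁻ s in J, I l s ^ (m/l)) ^ (4*σ/m)
          * (∫⁻ s in J, I 6 s ^ ((1:ℝ)/3)) ^ (2*b)) := mul_le_mul_right holder _
  -- assemble
  rw [hM4, hMl, hM2, hM6]
  calc (∫⁻ s in J, I 4 s) ^ ((1:ℝ)/4)
      ≤ (K ^ (4*a) * ((∫⁻ s in J, I l s ^ (m/l)) ^ (4*σ/m)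
          * (∫⁻ s in J, I 6 s ^ ((1:ℝ)/3)) ^ (2*b))) ^ ((1:ℝ)/4) :=
        ENNReal.rpow_le_rpow step2 h14
    _ = ((∫⁻ s in J, I l s ^ (m/l)) ^ ((1:ℝ)/m)) ^ σ * K ^ a
        * ((∫⁻ s in J, I 6 s ^ ((1:ℝ)/3)) ^ ((1:ℝ)/2)) ^ b := by
        rw [ENNReal.mul_rpow_of_nonneg _ _ h14, ENNReal.mul_rpow_of_nonneg _ _ h14]
        have f1 : (K ^ (4*a)) ^ ((1:ℝ)/4) = K ^ a := by
          rw [← ENNReal.rpow_mul]; congr 1; ring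
        have f2 : ((∫⁻ s in J, I l s ^ (m/l)) ^ (4*σ/m)) ^ ((1:ℝ)/4)
            = ((∫⁻ s in J, I l s ^ (m/l)) ^ ((1:ℝ)/m)) ^ σ := by
          rw [← ENNReal.rpow_mul, ← ENNReal.rpow_mul]; congr 1; ring
        have f3 : ((∫⁻ s in J, I 6 s ^ ((1:ℝ)/3)) ^ (2*b)) ^ ((1:ℝ)/4)
            = ((∫⁻ s in J, I 6 s ^ ((1:ℝ)/3)) ^ ((1:ℝ)/2)) ^ b := by
          rw [← ENNReal.rpow_mul, ← ENNReal.rpow_mul]; congr 1; ring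
        rw [f1, f2, f3]
        ring
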